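/- Let K and E be full-dimensional convex bodies in ℝⁿ and let Ω ⊆ S^{n−1} determine K, with the convex hull of Ω containing the origin in its interior. Then, in the Hausdorff metric, (1/λ)·K_λ converges to E as λ → ∞, and (1/λ)·K(Ω,λ) converges to E^Ω as λ → ∞. -/

import Mathlib

open scoped Pointwise RealInnerProductSpace
open Metric MeasureTheory

/-- Euclidean n-space. -/
abbrev Eucl (n : ℕ) := EuclideanSpace ℝ (Fin n)

/-- Support function h_K(u) = sup {⟨x,u⟩ : x ∈ K}. -/
noncomputable def suppFn {n : ℕ} (K : Set (Eucl n)) (u : Eucl n) : ℝ :=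
  sSup ((fun x => (inner ℝ x u : ℝ)) '' K)

/-- Closed halfspace H⁻_{u,α} = {x : ⟨x,u⟩ ≤ α}. -/
def halfspace {n : ℕ} (u : Eucl n) (α : ℝ) : Set (Eucl n) := {x | (inner ℝ x u : ℝ) ≤ α}

/-- Minkowski difference M ∼ N = {x : N + x ⊆ M}. -/
def mdiff {n : ℕ} (M N : Set (Eucl n)) : Set (Eucl n) := {x | N + {x} ⊆ M}

/-- Relative inradius r(K;E) = sup {r ≥ 0 : ∃ x, x + r•E ⊆ K}. -/
noncomputable def inradius {n : ℕ} (K E : Set (Eucl n)) : ℝ :=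
  sSup {r : ℝ | 0 ≤ r ∧ ∃ x : Eucl n, r • E + {x} ⊆ K}

/-- Inner (λ ≤ 0) and outer (λ ≥ 0) parallel bodies K_λ of K relative to E. -/
noncomputable def parallelBody {n : ℕ} (K E : Set (Eucl n)) (l : ℝ) : Set (Eucl n) :=
  if l ≤ 0 then mdiff K (|l| • E) else K + l • E

/-- A is homothetic to B: A = α•B + x for some α > 0 and x. -/
def Homothetic {n : ℕ} (A B : Set (Eucl n)) : Prop :=
  ∃ α : ℝ, 0 < α ∧ ∃ x : Eucl n, A = α • B + {x}

/-- The hyperplane {x : ⟨x,u⟩ = α} supports M: it meets M and M lies in one of the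
two closed halfspaces bounded by it. -/
def SupportsHyp {n : ℕ} (u : Eucl n) (α : ℝ) (M : Set (Eucl n)) : Prop :=
  (M ∩ {x | (inner ℝ x u : ℝ) = α}).Nonempty ∧
    (M ⊆ {x | (inner ℝ x u : ℝ) ≤ α} ∨ M ⊆ {x | α ≤ (inner ℝ x u : ℝ)})

/-- K is a tangential body of E: E ⊆ K and through every boundary point of K there is a
supporting hyperplane of K that also supports E. -/
def IsTangentialBody {n : ℕ} (K E : Set (Eucl n)) : Prop :=
  E ⊆ K ∧ ∀ p ∈ frontier K, ∃ u : Eucl n, u ≠ 0 ∧ ∃ α : ℝ,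
    (inner ℝ p u : ℝ) = α ∧ SupportsHyp u α K ∧ SupportsHyp u α E

/-- Ω determines K: K is the intersection of the halfspaces with normals in Ω at heights h_K. -/
def Determines {n : ℕ} (Ω K : Set (Eucl n)) : Prop :=
  K = ⋂ u ∈ Ω, halfspace u (suppFn K u)

/-- The Wulff shape K(Ω,λ) = ⋂_{u ∈ Ω} H⁻_{u, h_K(u) + λ h_E(u)}. -/
noncomputable def wulff {n : ℕ} (K E Ω : Set (Eucl n)) (l : ℝ) : Set (Eucl n) :=
  ⋂ u ∈ Ω, halfspace u (suppFn K u + l * suppFn E u)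

/-- E^Ω = ⋂_{u ∈ Ω} H⁻_{u, h_E(u)}. -/
noncomputable def tangBody {n : ℕ} (E Ω : Set (Eucl n)) : Set (Eucl n) :=
  ⋂ u ∈ Ω, halfspace u (suppFn E u)

/-! For `λ > 0`, `λ⁻¹ • K_λ = λ⁻¹ • K + E` lies within `R / λ` of `E` when `K ⊆ B(0, R)`.
For the Wulff shapes, `λ⁻¹ • K(Ω, λ)` is cut out by the halfspaces `⟪y, u⟫ ≤ h_E(u) + h_K(u) / λ`,
`u ∈ Ω`. It contains `x₀ / λ + E^Ω` for any `x₀ ∈ K`. Conversely, if `B(z, ρ) ⊆ E` then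
`h_E(u) - ⟪z, u⟫ ≥ ρ` on unit vectors, so the homothety centred at `z` with ratio
`ρ / (ρ + R / λ)` absorbs the excess `R / λ` and maps `λ⁻¹ • K(Ω, λ)` into `E^Ω`; it moves
points by `O(1 / λ)` because `0 ∈ int conv Ω` makes these sets bounded uniformly in `λ ≥ 1`. -/

open Filter Topology

lemma mul_norm_le_of_forall_inner_le {F : Type*} [NormedAddCommGroup F] [InnerProductSpace ℝ F]
    {Ω : Set F} {δ C : ℝ} (hδ : 0 ≤ δ) (hball : closedBall 0 δ ⊆ convexHull ℝ Ω) {x : F}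
    (hx : ∀ u ∈ Ω, ⟪x, u⟫ ≤ C) : δ * ‖x‖ ≤ C := by
  have hhull : convexHull ℝ Ω ⊆ {y | ⟪x, y⟫ ≤ C} :=
    convexHull_min hx (convex_halfSpace_le (innerₛₗ ℝ x).isLinear C)
  rcases eq_or_ne x 0 with rfl | hx0
  · simpa using hhull (hball (mem_closedBall_self hδ))
  · have hxn : 0 < ‖x‖ := norm_pos_iff.mpr hx0
    have hmem : (δ / ‖x‖) • x ∈ closedBall (0 : F) δ := by
      rw [mem_closedBall_zero_iff, norm_smul, Real.norm_of_nonneg (by positivity),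
        div_mul_cancel₀ _ hxn.ne']
    have key := hhull (hball hmem)
    rw [Set.mem_ofPred_eq, real_inner_smul_right, real_inner_self_eq_norm_sq] at key
    calc δ * ‖x‖ = δ / ‖x‖ * ‖x‖ ^ 2 := by field_simp
      _ ≤ C := key

lemma dist_inv_smul_add_self_le {F : Type*} [SeminormedAddCommGroup F] [NormedSpace ℝ F]
    {a : F} {R l : ℝ} (hl : 0 < l) (ha : a ∈ closedBall 0 R) (x : F) :
    dist (l⁻¹ • a + x) x ≤ R / l := by
  rw [dist_add_self_left, norm_smul_of_nonneg (inv_nonneg.2 hl.le), inv_mul_eq_div]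
  gcongr
  exact mem_closedBall_zero_iff.mp ha

lemma tendsto_hausdorffEDist_zero_of_forall_exists_dist_le {X : Type*} [PseudoMetricSpace X]
    {A B : ℝ → Set X} {C₁ C₂ : ℝ}
    (h₁ : ∀ᶠ l in atTop, ∀ x ∈ A l, ∃ y ∈ B l, dist x y ≤ C₁ / l)
    (h₂ : ∀ᶠ l in atTop, ∀ y ∈ B l, ∃ x ∈ A l, dist y x ≤ C₂ / l) :
    Tendsto (fun l => hausdorffEDist (A l) (B l)) atTop (𝓝 0) := by
  have hC : Tendsto (fun l : ℝ => ENNReal.ofReal (max C₁ C₂ / l)) atTop (𝓝 0) := by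
    rw [← ENNReal.ofReal_zero]
    exact ENNReal.tendsto_ofReal (tendsto_const_nhds.div_atTop tendsto_id)
  refine tendsto_of_tendsto_of_tendsto_of_le_of_le' tendsto_const_nhds hC
    (Eventually.of_forall fun _ => zero_le) ?_
  filter_upwards [h₁, h₂, eventually_gt_atTop 0] with l h₁ h₂ hl
  refine hausdorffEDist_le_of_mem_edist (fun x hx => ?_) (fun y hy => ?_)
  · obtain ⟨y, hy, hxy⟩ := h₁ x hx
    refine ⟨y, hy, edist_dist x y ▸ ENNReal.ofReal_le_ofReal (hxy.trans ?_)⟩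
    gcongr
    exact le_max_left _ _
  · obtain ⟨x, hx, hyx⟩ := h₂ y hy
    refine ⟨x, hx, edist_dist y x ▸ ENNReal.ofReal_le_ofReal (hyx.trans ?_)⟩
    gcongr
    exact le_max_right _ _

section ConvexGeometry

variable {n : ℕ}

lemma inner_le_of_subset_closedBall {K : Set (Eucl n)} {R : ℝ} (hK : K ⊆ closedBall 0 R)
    {x : Eucl n} (hx : x ∈ K) (u : Eucl n) : ⟪x, u⟫ ≤ R * ‖u‖ :=
  (real_inner_le_norm x u).trans <|
    mul_le_mul_of_nonneg_right (mem_closedBall_zero_iff.mp (hK hx)) (norm_nonneg u)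

lemma inner_le_suppFn {K : Set (Eucl n)} (hK : Bornology.IsBounded K) {x : Eucl n} (hx : x ∈ K)
    (u : Eucl n) : ⟪x, u⟫ ≤ suppFn K u := by
  obtain ⟨R, hR⟩ := hK.subset_closedBall 0
  refine le_csSup ⟨R * ‖u‖, ?_⟩ ⟨x, hx, rfl⟩
  rintro _ ⟨y, hy, rfl⟩
  exact inner_le_of_subset_closedBall hR hy u

lemma suppFn_le {K : Set (Eucl n)} {R : ℝ} (hR : 0 ≤ R) (hK : K ⊆ closedBall 0 R)
    (u : Eucl n) : suppFn K u ≤ R * ‖u‖ := by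
  refine Real.sSup_le ?_ (by positivity)
  rintro _ ⟨x, hx, rfl⟩
  exact inner_le_of_subset_closedBall hK hx u

lemma inner_add_le_suppFn {E : Set (Eucl n)} (hE : Bornology.IsBounded E) {z : Eucl n} {ρ : ℝ}
    (hρ : 0 ≤ ρ) (hz : closedBall z ρ ⊆ E) {u : Eucl n} (hu : ‖u‖ = 1) :
    ⟪z, u⟫ + ρ ≤ suppFn E u := by
  have hmem : z + ρ • u ∈ E := hz <| by
    rw [mem_closedBall, dist_self_add_left, norm_smul, hu, mul_one, Real.norm_of_nonneg hρ]
  simpa [inner_add_left, real_inner_smul_left, real_inner_self_eq_norm_sq, hu] using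
    inner_le_suppFn hE hmem u

lemma inv_smul_parallelBody {K E : Set (Eucl n)} {l : ℝ} (hl : 0 < l) :
    l⁻¹ • parallelBody K E l = l⁻¹ • K + E := by
  rw [parallelBody, if_neg hl.not_ge, smul_add, smul_smul, inv_mul_cancel₀ hl.ne', one_smul]

lemma mem_tangBody {E Ω : Set (Eucl n)} {x : Eucl n} :
    x ∈ tangBody E Ω ↔ ∀ u ∈ Ω, ⟪x, u⟫ ≤ suppFn E u := by
  simp only [tangBody, Set.mem_iInter, halfspace, Set.mem_ofPred_eq]

lemma mem_inv_smul_wulff {K E Ω : Set (Eucl n)} {l : ℝ} (hl : 0 < l) {y : Eucl n} :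
    y ∈ l⁻¹ • wulff K E Ω l ↔ ∀ u ∈ Ω, ⟪y, u⟫ ≤ l⁻¹ * suppFn K u + suppFn E u := by
  rw [Set.mem_smul_set_iff_inv_smul_mem₀ (inv_ne_zero hl.ne'), inv_inv]
  simp only [wulff, Set.mem_iInter, halfspace, Set.mem_ofPred_eq, real_inner_smul_left]
  refine forall₂_congr fun u _ => ?_
  rw [show l⁻¹ * suppFn K u + suppFn E u = (suppFn K u + l * suppFn E u) / l by field_simp,
    le_div_iff₀ hl, mul_comm]

lemma inv_smul_add_mem_inv_smul_wulff {K E Ω : Set (Eucl n)} (hK : Bornology.IsBounded K)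
    {x₀ x : Eucl n} (hx₀ : x₀ ∈ K) (hx : x ∈ tangBody E Ω) {l : ℝ} (hl : 0 < l) :
    l⁻¹ • x₀ + x ∈ l⁻¹ • wulff K E Ω l := by
  rw [mem_tangBody] at hx
  rw [mem_inv_smul_wulff hl]
  intro u hu
  rw [inner_add_left, real_inner_smul_left]
  gcongr
  · exact inner_le_suppFn hK hx₀ u
  · exact hx u hu

lemma homothety_mem_tangBody {E Ω : Set (Eucl n)} (hE : Bornology.IsBounded E)
    (hΩ : Ω ⊆ sphere 0 1) {z : Eucl n} {ρ c : ℝ} (hρ : 0 < ρ) (hc : 0 ≤ c)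
    (hz : closedBall z ρ ⊆ E) {y : Eucl n} (hy : ∀ u ∈ Ω, ⟪y, u⟫ ≤ c + suppFn E u) :
    AffineMap.homothety z (ρ / (ρ + c)) y ∈ tangBody E Ω := by
  refine mem_tangBody.mpr fun u hu => ?_
  have hzu : ⟪z, u⟫ + ρ ≤ suppFn E u :=
    inner_add_le_suppFn hE hρ.le hz (mem_sphere_zero_iff_norm.mp (hΩ hu))
  set s := suppFn E u - ⟪z, u⟫
  have hcontract : ρ / (ρ + c) * (c + s) ≤ s := by
    rw [div_mul_eq_mul_div, div_le_iff₀ (by positivity)]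
    nlinarith
  have hyz : ρ / (ρ + c) * (⟪y, u⟫ - ⟪z, u⟫) ≤ ρ / (ρ + c) * (c + s) := by
    gcongr
    linarith [hy u hu]
  rw [AffineMap.homothety_apply, vsub_eq_sub, vadd_eq_add, inner_add_left, real_inner_smul_left,
    inner_sub_left]
  linarith

lemma exists_mem_tangBody_dist_le {E Ω : Set (Eucl n)} (hE : Bornology.IsBounded E)
    (hΩ : Ω ⊆ sphere 0 1) {z : Eucl n} {ρ c : ℝ} (hρ : 0 < ρ) (hc : 0 ≤ c)
    (hz : closedBall z ρ ⊆ E) {y : Eucl n} (hy : ∀ u ∈ Ω, ⟪y, u⟫ ≤ c + suppFn E u) :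
    ∃ x ∈ tangBody E Ω, dist y x ≤ c / ρ * dist z y := by
  refine ⟨_, homothety_mem_tangBody hE hΩ hρ hc hz hy, ?_⟩
  have hratio : 1 - ρ / (ρ + c) = c / (ρ + c) := by field_simp; ring
  rw [dist_comm, dist_homothety_self, hratio, Real.norm_of_nonneg (by positivity)]
  gcongr
  linarith

end ConvexGeometry

section Limits

variable {n : ℕ}

lemma tendsto_hausdorffEDist_inv_smul_parallelBody {K : Set (Eucl n)} (E : Set (Eucl n))
    (hK : Bornology.IsBounded K) (hK₀ : K.Nonempty) :
    Tendsto (fun l : ℝ => hausdorffEDist (l⁻¹ • parallelBody K E l) E) atTop (𝓝 0) := by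
  obtain ⟨x₀, hx₀⟩ := hK₀
  obtain ⟨R, hKR⟩ := hK.subset_closedBall 0
  refine tendsto_hausdorffEDist_zero_of_forall_exists_dist_le (C₁ := R) (C₂ := R) ?_ ?_
  · filter_upwards [eventually_gt_atTop 0] with l hl
    rw [inv_smul_parallelBody hl]
    rintro _ ⟨_, ⟨k, hk, rfl⟩, e, he, rfl⟩
    exact ⟨e, he, dist_inv_smul_add_self_le hl (hKR hk) e⟩
  · filter_upwards [eventually_gt_atTop 0] with l hl e he
    rw [inv_smul_parallelBody hl]
    refine ⟨l⁻¹ • x₀ + e, Set.add_mem_add (Set.smul_mem_smul_set hx₀) he, ?_⟩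
    rw [dist_comm]
    exact dist_inv_smul_add_self_le hl (hKR hx₀) e

lemma exists_mem_tangBody_dist_le_of_mem_inv_smul_wulff {K E Ω : Set (Eucl n)}
    (hΩ : Ω ⊆ sphere 0 1) {δ : ℝ} (hδ : 0 < δ) (hδΩ : closedBall 0 δ ⊆ convexHull ℝ Ω) {R : ℝ}
    (hR : 0 ≤ R) (hKR : K ⊆ closedBall 0 R) (hER : E ⊆ closedBall 0 R) {z : Eucl n} {ρ : ℝ}
    (hρ : 0 < ρ) (hzρ : closedBall z ρ ⊆ E) {l : ℝ} (hl : 1 ≤ l) {y : Eucl n}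
    (hy : y ∈ l⁻¹ • wulff K E Ω l) :
    ∃ x ∈ tangBody E Ω, dist y x ≤ R * (2 * R / δ + R) / ρ / l := by
  have hsuppFn : ∀ X ⊆ closedBall 0 R, ∀ u ∈ Ω, suppFn X u ≤ R := fun X hX u hu => by
    simpa [mem_sphere_zero_iff_norm.mp (hΩ hu)] using suppFn_le hR hX u
  have hy' : ∀ u ∈ Ω, ⟪y, u⟫ ≤ l⁻¹ * R + suppFn E u := fun u hu =>
    ((mem_inv_smul_wulff (one_pos.trans_le hl)).mp hy u hu).trans
      (by gcongr; exact hsuppFn K hKR u hu)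
  have hyR : δ * ‖y‖ ≤ 2 * R := mul_norm_le_of_forall_inner_le hδ.le hδΩ fun u hu => by
    linarith [hy' u hu, hsuppFn E hER u hu,
      mul_le_of_le_one_left hR (inv_le_one_of_one_le₀ hl)]
  have hzy : dist z y ≤ 2 * R / δ + R := by
    have hz : ‖z‖ ≤ R := mem_closedBall_zero_iff.mp (hER (hzρ (mem_closedBall_self hρ.le)))
    have hy : ‖y‖ ≤ 2 * R / δ := by rw [le_div_iff₀ hδ]; linarith
    rw [dist_comm, dist_eq_norm]
    linarith [norm_sub_le y z]
  obtain ⟨x, hx, hxy⟩ := exists_mem_tangBody_dist_le (isBounded_closedBall.subset hER) hΩ hρ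
    (by positivity) hzρ hy'
  refine ⟨x, hx, hxy.trans ?_⟩
  calc l⁻¹ * R / ρ * dist z y ≤ l⁻¹ * R / ρ * (2 * R / δ + R) := by gcongr
    _ = R * (2 * R / δ + R) / ρ / l := by ring

lemma tendsto_hausdorffEDist_inv_smul_wulff {K E Ω : Set (Eucl n)} (hK : Bornology.IsBounded K)
    (hK₀ : K.Nonempty) (hE : Bornology.IsBounded E) (hEint : (interior E).Nonempty)
    (hΩ : Ω ⊆ sphere 0 1) (hΩhull : 0 ∈ interior (convexHull ℝ Ω)) :
    Tendsto (fun l : ℝ => hausdorffEDist (l⁻¹ • wulff K E Ω l) (tangBody E Ω)) atTop (𝓝 0) := by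
  obtain ⟨x₀, hx₀⟩ := hK₀
  obtain ⟨z, hz⟩ := hEint
  obtain ⟨ρ, hρ, hzρ⟩ := nhds_basis_closedBall.mem_iff.mp (mem_interior_iff_mem_nhds.mp hz)
  obtain ⟨δ, hδ, hδΩ⟩ := nhds_basis_closedBall.mem_iff.mp (mem_interior_iff_mem_nhds.mp hΩhull)
  obtain ⟨R, hR, hKER⟩ := (hK.union hE).subset_closedBall_lt 0 0
  have hKR : K ⊆ closedBall 0 R := Set.subset_union_left.trans hKER
  have hER : E ⊆ closedBall 0 R := Set.subset_union_right.trans hKER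
  refine tendsto_hausdorffEDist_zero_of_forall_exists_dist_le
    (C₁ := R * (2 * R / δ + R) / ρ) (C₂ := R) ?_ ?_
  · filter_upwards [eventually_ge_atTop 1] with l hl y hy
    exact exists_mem_tangBody_dist_le_of_mem_inv_smul_wulff hΩ hδ hδΩ hR.le hKR hER hρ hzρ hl hy
  · filter_upwards [eventually_gt_atTop 0] with l hl x hx
    refine ⟨l⁻¹ • x₀ + x, inv_smul_add_mem_inv_smul_wulff hK hx₀ hx hl, ?_⟩
    rw [dist_comm]
    exact dist_inv_smul_add_self_le hl (hKR hx₀) x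

end Limits

theorem statement18_general {n : ℕ} (K E : Set (Eucl n))
    (hKcomp : IsCompact K) (hKint : (interior K).Nonempty)
    (hEcomp : IsCompact E) (hEint : (interior E).Nonempty)
    (Ω : Set (Eucl n)) (hΩsph : Ω ⊆ sphere (0 : Eucl n) 1)
    (hΩhull : (0 : Eucl n) ∈ interior (convexHull ℝ Ω)) :
    Filter.Tendsto (fun l : ℝ => EMetric.hausdorffEdist (l⁻¹ • parallelBody K E l) E)
        Filter.atTop (nhds 0) ∧
      Filter.Tendsto (fun l : ℝ => EMetric.hausdorffEdist (l⁻¹ • wulff K E Ω l) (tangBody E Ω))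
        Filter.atTop (nhds 0) := by
  have hK₀ : K.Nonempty := hKint.mono interior_subset
  exact ⟨tendsto_hausdorffEDist_inv_smul_parallelBody E hKcomp.isBounded hK₀,
    tendsto_hausdorffEDist_inv_smul_wulff hKcomp.isBounded hK₀ hEcomp.isBounded hEint hΩsph
      hΩhull⟩

/-- In the Hausdorff metric, (1/λ)•K_λ → E and (1/λ)•K(Ω,λ) → E^Ω
as λ → ∞. -/
theorem statement18 {n : ℕ} (K E : Set (Eucl n))
    (hKcomp : IsCompact K) (hKconv : Convex ℝ K) (hKint : (interior K).Nonempty)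
    (hEcomp : IsCompact E) (hEconv : Convex ℝ E) (hEint : (interior E).Nonempty)
    (Ω : Set (Eucl n)) (hΩsph : Ω ⊆ sphere (0 : Eucl n) 1) (hΩdet : Determines Ω K)
    (hΩhull : (0 : Eucl n) ∈ interior (convexHull ℝ Ω)) :
    Filter.Tendsto (fun l : ℝ => EMetric.hausdorffEdist (l⁻¹ • parallelBody K E l) E)
        Filter.atTop (nhds 0) ∧
      Filter.Tendsto (fun l : ℝ => EMetric.hausdorffEdist (l⁻¹ • wulff K E Ω l) (tangBody E Ω))
        Filter.atTop (nhds 0) :=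
  statement18_general K E hKcomp hKint hEcomp hEint Ω hΩsph hΩhull
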